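/- Let ω be the dispersion relation of the unpinned case. For p ∈ ℝ there is C₄ > 0 such that for all k with |k| > ε|p| and all ε > 0, |ε⁻¹(ω(k+εp/2) − ω(k−εp/2)) − p·ω'(k)| ≤ ε C₄ |p|²/|k|. -/

import Mathlib

/-!
Exponential decay of `α` lets one differentiate the cosine series `α̂` termwise twice, so `α̂''`
is continuous and bounded by some `S`, and `α̂'(0) = 0` gives `|α̂'(x)| ≤ S |x|`. Near `0`,
`α̂(x) ≥ α̂''(0) x² / 4`; away from `0` (up to `|x| ≤ 3/4`, using that `α̂` is `1`-periodic)
`α̂` is bounded below on a compact set, so `ω(x) = √(α̂ x) ≥ b |x|`. Hence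
`ω'' = α̂'' / (2ω) - α̂'² / (4ω³) = O(1/|x|)`. On `[k - ε|p|/2, k + ε|p|/2]` one has `|x| ≥ |k|/2`,
and the symmetric difference `ω(k + h) - ω(k - h) - 2h ω'(k)` is at most `2 h² sup |ω''|`.
-/

open Real Set

theorem abs_sub_le_of_abs_deriv_le {f f' : ℝ → ℝ} {a b M : ℝ}
    (hf : ∀ x ∈ uIcc a b, HasDerivAt f (f' x) x) (hM : ∀ x ∈ uIcc a b, |f' x| ≤ M) :
    |f b - f a| ≤ M * |b - a| :=
  convex_uIcc a b |>.norm_image_sub_le_of_norm_hasDerivWithin_le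
    (fun x hx => (hf x hx).hasDerivWithinAt) hM left_mem_uIcc right_mem_uIcc

theorem abs_sub_sub_two_mul_deriv_le {f f' f'' : ℝ → ℝ} {a h M : ℝ}
    (hf : ∀ x ∈ Icc (a - |h|) (a + |h|), HasDerivAt f (f' x) x)
    (hf' : ∀ x ∈ Icc (a - |h|) (a + |h|), HasDerivAt f' (f'' x) x)
    (hM : ∀ x ∈ Icc (a - |h|) (a + |h|), |f'' x| ≤ M) :
    |f (a + h) - f (a - h) - 2 * h * f' a| ≤ 2 * M * h ^ 2 := by
  set I := Icc (a - |h|) (a + |h|)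
  have haI : a ∈ I := ⟨by linarith [abs_nonneg h], by linarith [abs_nonneg h]⟩
  have hM₀ : 0 ≤ M := (abs_nonneg _).trans (hM a haI)
  have hsegI : ∀ x ∈ uIcc a (a + h), x ∈ I ∧ 2 * a - x ∈ I := by
    intro x hx
    have := abs_le.mp ((abs_sub_left_of_mem_uIcc hx).trans_eq (by rw [add_sub_cancel_left]))
    exact ⟨⟨by linarith, by linarith⟩, ⟨by linarith, by linarith⟩⟩
  have hf'_near : ∀ x ∈ I, |f' x - f' a| ≤ M * |h| := fun x hx =>
    (abs_sub_le_of_abs_deriv_le (fun y hy => hf' y (uIcc_subset_Icc haI hx hy))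
      fun y hy => hM y (uIcc_subset_Icc haI hx hy)).trans
      (mul_le_mul_of_nonneg_left (abs_sub_le_iff.mpr ⟨by linarith [hx.2], by linarith [hx.1]⟩) hM₀)
  have hG := abs_sub_le_of_abs_deriv_le (a := a) (b := a + h) (M := 2 * (M * |h|))
    (f := fun y => f y - f (2 * a - y) - 2 * (y - a) * f' a)
    (f' := fun y => f' y + f' (2 * a - y) - 2 * f' a) (fun y hy => by
      have hrefl := (hf _ (hsegI y hy).2).comp y ((hasDerivAt_id y).const_sub (2 * a))
      refine ((hf y (hsegI y hy).1).sub hrefl |>.sub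
        (((hasDerivAt_id y).sub_const a).const_mul 2 |>.mul_const (f' a))).congr_deriv ?_
      simp)
    fun y hy => by
      rw [show f' y + f' (2 * a - y) - 2 * f' a = (f' y - f' a) + (f' (2 * a - y) - f' a) by ring]
      linarith [abs_add_le (f' y - f' a) (f' (2 * a - y) - f' a),
        hf'_near y (hsegI y hy).1, hf'_near _ (hsegI y hy).2]
  simp only [add_sub_cancel_left, sub_self, mul_zero, zero_mul, sub_zero,
    show 2 * a - (a + h) = a - h by ring, show 2 * a - a = a by ring] at hG
  calc _ ≤ 2 * (M * |h|) * |h| := hG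
    _ = 2 * M * h ^ 2 := by rw [mul_assoc, mul_assoc, ← sq, sq_abs]; ring

theorem exists_mul_sq_le_of_deriv2_pos {g g' g'' : ℝ → ℝ}
    (hg : ∀ x, HasDerivAt g (g' x) x) (hg' : ∀ x, HasDerivAt g' (g'' x) x)
    (hg''_cont : ContinuousAt g'' 0) (h₀ : g 0 = 0) (h₀' : g' 0 = 0) (h₀'' : 0 < g'' 0) :
    ∃ δ > 0, ∀ x, |x| ≤ δ → g'' 0 / 4 * x ^ 2 ≤ g x := by
  obtain ⟨δ, hδ, hnear⟩ := Metric.continuousAt_iff.mp hg''_cont (g'' 0 / 4) (by positivity)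
  have habs_le : ∀ {x y : ℝ}, y ∈ uIcc 0 x → |y| ≤ |x| := fun hy => by
    simpa using abs_sub_left_of_mem_uIcc hy
  have hg'_lin : ∀ x, |x| ≤ δ / 2 → |g' x - x * g'' 0| ≤ g'' 0 / 4 * |x| := fun x hx => by
    simpa [h₀'] using abs_sub_le_of_abs_deriv_le (a := 0) (b := x)
      (f := fun y => g' y - y * g'' 0) (f' := fun y => g'' y - g'' 0)
      (fun y _ => ((hg' y).sub ((hasDerivAt_id y).mul_const _)).congr_deriv (by simp))
      fun y hy => (hnear (by rw [Real.dist_0_eq_abs]; linarith [habs_le hy])).le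
  refine ⟨δ / 2, by positivity, fun x hx => ?_⟩
  have hquad := abs_sub_le_of_abs_deriv_le (a := 0) (b := x) (M := g'' 0 / 4 * |x|)
    (f := fun y => g y - y ^ 2 * (g'' 0 / 2)) (f' := fun y => g' y - y * g'' 0)
    (fun y _ => ((hg y).sub ((hasDerivAt_pow 2 y).mul_const _)).congr_deriv (by ring))
    fun y hy => (hg'_lin y ((habs_le hy).trans hx)).trans
      (mul_le_mul_of_nonneg_left (habs_le hy) (by positivity))
  simp only [h₀, sub_zero, ne_eq, OfNat.ofNat_ne_zero, not_false_eq_true, zero_pow,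
    zero_mul] at hquad
  rw [mul_assoc, abs_mul_abs_self] at hquad
  linarith [(abs_le.mp hquad).1]

theorem exists_mul_sq_le_of_near_zero_of_pos {g : ℝ → ℝ} {R δ c₀ : ℝ} (hg : Continuous g)
    (hR : 0 < R) (hδ : 0 < δ) (hc₀ : 0 < c₀) (hnear : ∀ x, |x| ≤ δ → c₀ * x ^ 2 ≤ g x)
    (hpos : ∀ x, |x| ≤ R → x ≠ 0 → 0 < g x) :
    ∃ c > 0, ∀ x, |x| ≤ R → c * x ^ 2 ≤ g x := by
  obtain ⟨m, hm, hmK⟩ := (isCompact_Icc (a := -R) (b := R)).diff (isOpen_Ioo (a := -δ) (b := δ))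
    |>.exists_forall_le' (a := 0) (f := g) hg.continuousOn fun x ⟨hxR, hxδ⟩ =>
      hpos x (abs_le.mpr hxR) (by rintro rfl; exact hxδ ⟨by linarith, hδ⟩)
  refine ⟨min c₀ (m / R ^ 2), by positivity, fun x hx => ?_⟩
  rcases le_or_gt |x| δ with hxδ | hxδ
  · exact (mul_le_mul_of_nonneg_right (min_le_left _ _) (sq_nonneg x)).trans (hnear x hxδ)
  · have hxK : x ∈ Icc (-R) R \ Ioo (-δ) δ :=
      ⟨abs_le.mp hx, fun h => hxδ.not_ge (abs_lt.mpr h).le⟩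
    calc min c₀ (m / R ^ 2) * x ^ 2 ≤ m / R ^ 2 * R ^ 2 := by
          exact mul_le_mul (min_le_right _ _) (sq_le_sq' (abs_le.mp hx).1 (abs_le.mp hx).2)
            (sq_nonneg x) (by positivity)
      _ = m := div_mul_cancel₀ m (by positivity)
      _ ≤ g x := hmK x hxK

theorem pos_of_abs_lt_one_of_periodic {g : ℝ → ℝ} (hg : Function.Periodic g 1)
    (hpos : ∀ k ∈ Icc (-(1:ℝ)/2) (1/2), k ≠ 0 → 0 < g k) {x : ℝ} (hx : |x| < 1) (hx₀ : x ≠ 0) :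
    0 < g x := by
  obtain ⟨hx₁, hx₂⟩ := abs_lt.mp hx
  rcases lt_or_ge x (-1/2) with h | h
  · rw [← hg x]; exact hpos _ ⟨by linarith, by linarith⟩ (by linarith)
  rcases le_or_gt x (1/2) with h' | h'
  · exact hpos x ⟨h, h'⟩ hx₀
  · rw [← hg.sub_eq x]; exact hpos _ ⟨by linarith, by linarith⟩ (by linarith)

theorem hasDerivAt_div_two_mul_sqrt {g g' : ℝ → ℝ} {g'' x : ℝ} (hg : HasDerivAt g (g' x) x)
    (hg' : HasDerivAt g' g'' x) (hx : 0 < g x) :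
    HasDerivAt (fun y => g' y / (2 * √(g y)))
      (g'' / (2 * √(g x)) - g' x ^ 2 / (4 * √(g x) ^ 3)) x := by
  have hs : 0 < √(g x) := sqrt_pos.mpr hx
  refine (hg'.div ((hg.sqrt hx.ne').const_mul 2) (by positivity)).congr_deriv ?_
  field_simp
  ring

theorem abs_div_sub_sq_div_le {a₁ a₂ s x S b : ℝ} (hb : 0 < b) (hx : x ≠ 0)
    (ha₁ : |a₁| ≤ S * |x|) (ha₂ : |a₂| ≤ S) (hs : b * |x| ≤ s) :
    |a₂ / (2 * s) - a₁ ^ 2 / (4 * s ^ 3)| ≤ (S / (2 * b) + S ^ 2 / (4 * b ^ 3)) / |x| := by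
  have hx' : 0 < |x| := abs_pos.mpr hx
  have hbx : 0 < b * |x| := by positivity
  have hs₀ : 0 < s := hbx.trans_le hs
  have h₂ : |a₂ / (2 * s)| ≤ S / (2 * b) / |x| := by
    rw [abs_div, abs_of_pos (show 0 < 2 * s by positivity), div_div, mul_assoc]
    exact div_le_div₀ ((abs_nonneg _).trans ha₂) ha₂ (by positivity) (by linarith)
  have h₁ : |a₁ ^ 2 / (4 * s ^ 3)| ≤ S ^ 2 / (4 * b ^ 3) / |x| := by
    rw [abs_of_nonneg (by positivity), ← sq_abs]
    calc |a₁| ^ 2 / (4 * s ^ 3) ≤ (S * |x|) ^ 2 / (4 * (b * |x|) ^ 3) := by gcongr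
      _ = S ^ 2 / (4 * b ^ 3) / |x| := by field_simp
  calc _ ≤ |a₂ / (2 * s)| + |a₁ ^ 2 / (4 * s ^ 3)| := abs_sub _ _
    _ ≤ _ := by rw [add_div]; exact add_le_add h₂ h₁

theorem abs_sqrt_sub_sqrt_sub_two_mul_deriv_le {g g' g'' : ℝ → ℝ} {S b R a h : ℝ}
    (hg : ∀ x, HasDerivAt g (g' x) x) (hg' : ∀ x, HasDerivAt g' (g'' x) x)
    (hS' : ∀ x, |g' x| ≤ S * |x|) (hS'' : ∀ x, |g'' x| ≤ S) (hb : 0 < b)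
    (hlow : ∀ x, |x| ≤ R → b * |x| ≤ √(g x)) (hh : 2 * |h| < |a|) (haR : |a| + |h| ≤ R) :
    |√(g (a + h)) - √(g (a - h)) - 2 * h * deriv (fun x => √(g x)) a|
      ≤ 2 * (2 * (S / (2 * b) + S ^ 2 / (4 * b ^ 3)) / |a|) * h ^ 2 := by
  have hnear : ∀ x ∈ Icc (a - |h|) (a + |h|), |a| / 2 ≤ |x| ∧ b * |x| ≤ √(g x) := fun x hx => by
    have := abs_le.mp <| (abs_abs_sub_abs_le_abs_sub x a).trans
      (abs_le.mpr ⟨by linarith [hx.1], by linarith [hx.2]⟩ : |x - a| ≤ |h|)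
    exact ⟨by linarith, hlow x (by linarith)⟩
  have hx₀ : ∀ x ∈ Icc (a - |h|) (a + |h|), x ≠ 0 := fun x hx =>
    abs_pos.mp ((by linarith [abs_nonneg h] : 0 < |a| / 2).trans_le (hnear x hx).1)
  have hgpos : ∀ x ∈ Icc (a - |h|) (a + |h|), 0 < g x := fun x hx =>
    sqrt_pos.mp ((mul_pos hb (abs_pos.mpr (hx₀ x hx))).trans_le (hnear x hx).2)
  have haI : a ∈ Icc (a - |h|) (a + |h|) := ⟨by linarith [abs_nonneg h], by linarith [abs_nonneg h]⟩
  have hC : 0 ≤ S / (2 * b) + S ^ 2 / (4 * b ^ 3) := by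
    have : 0 ≤ S := (abs_nonneg _).trans (hS'' 0)
    positivity
  rw [((hg a).sqrt (hgpos a haI).ne').deriv]
  refine abs_sub_sub_two_mul_deriv_le (fun x hx => (hg x).sqrt (hgpos x hx).ne')
    (fun x hx => hasDerivAt_div_two_mul_sqrt (hg x) (hg' x) (hgpos x hx)) fun x hx => ?_
  calc _ ≤ (S / (2 * b) + S ^ 2 / (4 * b ^ 3)) / |x| :=
        abs_div_sub_sq_div_le hb (hx₀ x hx) (hS' x) (hS'' x) (hnear x hx).2
    _ ≤ (S / (2 * b) + S ^ 2 / (4 * b ^ 3)) / (|a| / 2) :=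
        div_le_div_of_nonneg_left hC (by linarith [abs_nonneg h]) (hnear x hx).1
    _ = _ := by ring

theorem summable_abs_pow_mul_exp_neg_mul_abs {C : ℝ} (hC : 0 < C) (n : ℕ) :
    Summable fun z : ℤ => |(z : ℝ)| ^ n * exp (-C * |(z : ℝ)|) := by
  have h := summable_pow_mul_exp_neg_nat_mul n hC
  refine .of_nat_of_neg ?_ ?_ <;> simpa using h

theorem summable_abs_mul_abs_pow_of_abs_le_exp {a : ℤ → ℝ} {C₁ C₂ : ℝ} (hC₂ : 0 < C₂)
    (ha : ∀ z, |a z| ≤ C₁ * exp (-C₂ * |(z : ℝ)|)) (n : ℕ) :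
    Summable fun z : ℤ => |a z| * |(z : ℝ)| ^ n := by
  refine ((summable_abs_pow_mul_exp_neg_mul_abs hC₂ n).mul_left C₁).of_nonneg_of_le
    (fun z => by positivity) fun z => ?_
  rw [← mul_assoc, mul_right_comm]
  exact mul_le_mul_of_nonneg_right (ha z) (by positivity)

theorem norm_mul_mul_two_pi_mul_pow_le (a t x : ℝ) (ht : |t| ≤ 1) (n : ℕ) :
    ‖a * (t * (2 * π * x) ^ n)‖ ≤ (2 * π) ^ n * (|a| * |x| ^ n) := by
  rw [Real.norm_eq_abs, abs_mul, abs_mul, abs_pow, abs_mul, abs_of_pos two_pi_pos, mul_pow]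
  calc |a| * (|t| * ((2 * π) ^ n * |x| ^ n)) ≤ |a| * (1 * ((2 * π) ^ n * |x| ^ n)) := by gcongr
    _ = _ := by ring

theorem hasDerivAt_mul_cos_two_pi_mul (c x k : ℝ) :
    HasDerivAt (fun k => c * cos (2 * π * k * x))
      (c * (-sin (2 * π * k * x) * (2 * π * x) ^ 1)) k := by
  refine ((((hasDerivAt_id k).const_mul (2 * π)).mul_const x).cos.const_mul c).congr_deriv ?_
  simp only [id_eq]; ring

theorem hasDerivAt_mul_neg_sin_two_pi_mul (c x k : ℝ) :
    HasDerivAt (fun k => c * (-sin (2 * π * k * x) * (2 * π * x) ^ 1))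
      (c * (-cos (2 * π * k * x) * (2 * π * x) ^ 2)) k := by
  refine (((((hasDerivAt_id k).const_mul (2 * π)).mul_const x).sin.neg.mul_const
    ((2 * π * x) ^ 1)).const_mul c).congr_deriv ?_
  simp only [id_eq]; ring

noncomputable section

def cosSeries (a : ℤ → ℝ) (k : ℝ) : ℝ := ∑' z : ℤ, a z * cos (2 * π * k * z)

-- The exponent `^ 1` puts the terms in the shape bounded by `norm_mul_mul_two_pi_mul_pow_le`.
def cosSeriesDeriv (a : ℤ → ℝ) (k : ℝ) : ℝ :=
  ∑' z : ℤ, a z * (-sin (2 * π * k * z) * (2 * π * z) ^ 1)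

def cosSeriesDeriv2 (a : ℤ → ℝ) (k : ℝ) : ℝ :=
  ∑' z : ℤ, a z * (-cos (2 * π * k * z) * (2 * π * z) ^ 2)

end

section
variable {a : ℤ → ℝ}

theorem summable_mul_cos (hmom : ∀ n ≤ 2, Summable fun z : ℤ => |a z| * |(z : ℝ)| ^ n) (k : ℝ) :
    Summable fun z : ℤ => a z * cos (2 * π * k * z) :=
  (hmom 0 (by norm_num)).of_norm_bounded fun z => by
    simpa using norm_mul_mul_two_pi_mul_pow_le (a z) (cos (2 * π * k * z)) z (abs_cos_le_one _) 0

theorem hasDerivAt_cosSeries (hmom : ∀ n ≤ 2, Summable fun z : ℤ => |a z| * |(z : ℝ)| ^ n)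
    (k : ℝ) : HasDerivAt (cosSeries a) (cosSeriesDeriv a k) k :=
  hasDerivAt_tsum ((hmom 1 (by norm_num)).mul_left ((2 * π) ^ 1))
    (fun z => hasDerivAt_mul_cos_two_pi_mul (a z) z)
    (fun z y => norm_mul_mul_two_pi_mul_pow_le _ _ _ (by simpa using abs_sin_le_one _) 1)
    (summable_mul_cos hmom 0) k

theorem hasDerivAt_cosSeriesDeriv (hmom : ∀ n ≤ 2, Summable fun z : ℤ => |a z| * |(z : ℝ)| ^ n)
    (k : ℝ) : HasDerivAt (cosSeriesDeriv a) (cosSeriesDeriv2 a k) k :=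
  hasDerivAt_tsum ((hmom 2 le_rfl).mul_left ((2 * π) ^ 2))
    (fun z => hasDerivAt_mul_neg_sin_two_pi_mul (a z) z)
    (fun z y => norm_mul_mul_two_pi_mul_pow_le _ _ _ (by simpa using abs_cos_le_one _) 2)
    (y₀ := 0) (by simp) k

theorem continuous_cosSeriesDeriv2 (hmom : ∀ n ≤ 2, Summable fun z : ℤ => |a z| * |(z : ℝ)| ^ n) :
    Continuous (cosSeriesDeriv2 a) :=
  continuous_tsum (fun z => by fun_prop) ((hmom 2 le_rfl).mul_left ((2 * π) ^ 2))
    fun z y => norm_mul_mul_two_pi_mul_pow_le _ _ _ (by simpa using abs_cos_le_one _) 2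

theorem abs_cosSeriesDeriv2_le (hmom : ∀ n ≤ 2, Summable fun z : ℤ => |a z| * |(z : ℝ)| ^ n)
    (k : ℝ) : |cosSeriesDeriv2 a k| ≤ (2 * π) ^ 2 * ∑' z : ℤ, |a z| * |(z : ℝ)| ^ 2 := by
  rw [← Real.norm_eq_abs, ← tsum_mul_left]
  exact tsum_of_norm_bounded ((hmom 2 le_rfl).mul_left _).hasSum
    fun z => norm_mul_mul_two_pi_mul_pow_le _ _ _ (by simpa using abs_cos_le_one _) 2

theorem cosSeriesDeriv_zero : cosSeriesDeriv a 0 = 0 := by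
  simp [cosSeriesDeriv]

theorem cosSeries_periodic : Function.Periodic (cosSeries a) 1 := fun k => by
  refine tsum_congr fun z => ?_
  rw [show 2 * π * (k + 1) * z = 2 * π * k * z + z * (2 * π) by ring, cos_add_int_mul_two_pi]

theorem abs_cosSeriesDeriv_le (hmom : ∀ n ≤ 2, Summable fun z : ℤ => |a z| * |(z : ℝ)| ^ n)
    (k : ℝ) : |cosSeriesDeriv a k| ≤ (2 * π) ^ 2 * (∑' z : ℤ, |a z| * |(z : ℝ)| ^ 2) * |k| := by
  simpa [cosSeriesDeriv_zero] using abs_sub_le_of_abs_deriv_le (a := 0) (b := k)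
    (fun y _ => hasDerivAt_cosSeriesDeriv hmom y) fun y _ => abs_cosSeriesDeriv2_le hmom y

theorem iteratedDeriv_two_cosSeries (hmom : ∀ n ≤ 2, Summable fun z : ℤ => |a z| * |(z : ℝ)| ^ n)
    (k : ℝ) : iteratedDeriv 2 (cosSeries a) k = cosSeriesDeriv2 a k := by
  rw [iteratedDeriv_succ, iteratedDeriv_one, funext fun x => (hasDerivAt_cosSeries hmom x).deriv,
    (hasDerivAt_cosSeriesDeriv hmom k).deriv]

theorem exists_mul_abs_le_sqrt_cosSeries
    (hmom : ∀ n ≤ 2, Summable fun z : ℤ => |a z| * |(z : ℝ)| ^ n)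
    (hpos : ∀ k ∈ Icc (-(1:ℝ)/2) (1/2), k ≠ 0 → 0 < cosSeries a k) (h₀ : cosSeries a 0 = 0)
    (h₀'' : 0 < cosSeriesDeriv2 a 0) {R : ℝ} (hR₀ : 0 < R) (hR : R < 1) :
    ∃ b > 0, ∀ x, |x| ≤ R → b * |x| ≤ √(cosSeries a x) := by
  have hD₁ := hasDerivAt_cosSeries hmom
  obtain ⟨δ, hδ, hnear⟩ := exists_mul_sq_le_of_deriv2_pos hD₁ (hasDerivAt_cosSeriesDeriv hmom)
    (continuous_cosSeriesDeriv2 hmom).continuousAt h₀ cosSeriesDeriv_zero h₀''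
  obtain ⟨c, hc, hlow⟩ := exists_mul_sq_le_of_near_zero_of_pos
    (continuous_iff_continuousAt.mpr fun x => (hD₁ x).continuousAt) hR₀ hδ (by positivity) hnear
    fun x hx hx₀ => pos_of_abs_lt_one_of_periodic cosSeries_periodic hpos (by linarith) hx₀
  refine ⟨√c, sqrt_pos.mpr hc, fun x hx => ?_⟩
  rw [← sqrt_sq (abs_nonneg x), ← sqrt_mul hc.le, sq_abs]
  exact sqrt_le_sqrt (hlow x hx)

end

theorem dispersion_second_order_bound_general (α : ℤ → ℝ)
    (hdecay : ∃ C₁ > (0:ℝ), ∃ C₂ > (0:ℝ), ∀ y : ℤ, |α y| ≤ C₁ * Real.exp (-C₂ * |(y:ℝ)|))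
    (hatα : ℝ → ℝ)
    (hhat : ∀ k : ℝ, hatα k = ∑' z : ℤ, α z * Real.cos (2*π*k*z))
    (hpos : ∀ k ∈ Set.Icc (-(1:ℝ)/2) (1/2), k ≠ 0 → 0 < hatα k)
    (h0 : hatα 0 = 0)
    (h2 : 0 < iteratedDeriv 2 hatα 0)
    (p : ℝ) :
    ∃ C₄ > (0:ℝ), ∀ ε > (0:ℝ), ∀ k ∈ Set.Icc (-(1:ℝ)/2) (1/2), |k| > ε * |p| →
      |ε⁻¹ * (Real.sqrt (hatα (k + ε*p/2)) - Real.sqrt (hatα (k - ε*p/2)))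
          - p * deriv (fun k => Real.sqrt (hatα k)) k|
        ≤ ε * C₄ * |p|^2 / |k| := by
  obtain ⟨C₁, -, C₂, hC₂, hα⟩ := hdecay
  have hmom n (_ : n ≤ 2) := summable_abs_mul_abs_pow_of_abs_le_exp hC₂ hα n
  obtain rfl : hatα = cosSeries α := funext hhat
  rw [iteratedDeriv_two_cosSeries hmom] at h2
  obtain ⟨b, hb, hlow⟩ := exists_mul_abs_le_sqrt_cosSeries hmom hpos h0 h2 (R := 3 / 4)
    (by norm_num) (by norm_num)
  set S := (2 * π) ^ 2 * ∑' z : ℤ, |α z| * |(z : ℝ)| ^ 2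
  have hS : 0 < S := h2.trans_le ((le_abs_self _).trans (abs_cosSeriesDeriv2_le hmom 0))
  refine ⟨S / (2 * b) + S ^ 2 / (4 * b ^ 3), by positivity, fun ε hε k hk hkp => ?_⟩
  have hh : |ε * p / 2| = ε * |p| / 2 := by rw [abs_div, abs_mul, abs_of_pos hε, abs_two]
  have hk' : |k| ≤ 1 / 2 := abs_le.mpr ⟨by linarith [hk.1], hk.2⟩
  have hsym := abs_sqrt_sub_sqrt_sub_two_mul_deriv_le (a := k) (h := ε * p / 2)
    (hasDerivAt_cosSeries hmom) (hasDerivAt_cosSeriesDeriv hmom) (abs_cosSeriesDeriv_le hmom)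
    (abs_cosSeriesDeriv2_le hmom) hb hlow (by linarith) (by linarith)
  rw [show ε⁻¹ * (√(cosSeries α (k + ε * p / 2)) - √(cosSeries α (k - ε * p / 2)))
      - p * deriv (fun k => √(cosSeries α k)) k = ε⁻¹ * (√(cosSeries α (k + ε * p / 2))
      - √(cosSeries α (k - ε * p / 2)) - 2 * (ε * p / 2) * deriv (fun k => √(cosSeries α k)) k)
      by field_simp, abs_mul, abs_inv, abs_of_pos hε]
  calc _ ≤ ε⁻¹ * (2 * (2 * (S / (2 * b) + S ^ 2 / (4 * b ^ 3)) / |k|) * (ε * p / 2) ^ 2) := by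
        gcongr
    _ = _ := by rw [sq_abs]; field_simp

/-- second-order control of the difference quotient of the unpinned
dispersion relation `ω = √α̂` away from `k = 0`. -/
theorem dispersion_second_order_bound (α : ℤ → ℝ)
    (hsymm : ∀ y : ℤ, α (-y) = α y)
    (hdecay : ∃ C₁ > (0:ℝ), ∃ C₂ > (0:ℝ), ∀ y : ℤ, |α y| ≤ C₁ * Real.exp (-C₂ * |(y:ℝ)|))
    (hatα : ℝ → ℝ)
    (hhat : ∀ k : ℝ, hatα k = ∑' z : ℤ, α z * Real.cos (2*π*k*z))
    (hpos : ∀ k ∈ Set.Icc (-(1:ℝ)/2) (1/2), k ≠ 0 → 0 < hatα k)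
    (h0 : hatα 0 = 0)
    (h2 : 0 < iteratedDeriv 2 hatα 0)
    (p : ℝ) :
    ∃ C₄ > (0:ℝ), ∀ ε > (0:ℝ), ∀ k ∈ Set.Icc (-(1:ℝ)/2) (1/2), |k| > ε * |p| →
      |ε⁻¹ * (Real.sqrt (hatα (k + ε*p/2)) - Real.sqrt (hatα (k - ε*p/2)))
          - p * deriv (fun k => Real.sqrt (hatα k)) k|
        ≤ ε * C₄ * |p|^2 / |k| :=
  dispersion_second_order_bound_general α hdecay hatα hhat hpos h0 h2 p
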